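/- If a nonsignaling box P is nonlocal, i.e., there exists j with B_j(P) > 2, then Γ(P) > 0. Equivalently, any nonsignaling box with Γ(P) = 0 satisfies all four CHSH inequalities B_j ≤ 2. -/
import Mathlib


open Finset Real

noncomputable section

/-- A two-input two-output box: `P a b x y` is the probability of outputs `a, b`
given inputs `x, y`. -/
abbrev Box := Fin 2 → Fin 2 → Fin 2 → Fin 2 → ℝ

/-- The correlator `⟨A_x B_y⟩`. -/
def corr (P : Box) (x y : Fin 2) : ℝ :=
  ∑ a : Fin 2, ∑ b : Fin 2, (-1 : ℝ) ^ ((a : ℕ) + (b : ℕ)) * P a b x y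

/-- Alice's marginal expectation `⟨A_x⟩` (computed with Bob's input `y`). -/
def margA (P : Box) (x y : Fin 2) : ℝ :=
  ∑ a : Fin 2, ∑ b : Fin 2, (-1 : ℝ) ^ ((a : ℕ)) * P a b x y

/-- Bob's marginal expectation `⟨B_y⟩` (computed with Alice's input `x`). -/
def margB (P : Box) (x y : Fin 2) : ℝ :=
  ∑ a : Fin 2, ∑ b : Fin 2, (-1 : ℝ) ^ ((b : ℕ)) * P a b x y

/-- The absolute CHSH expression `B_{2α+β}`. -/
def bell (P : Box) (α β : Fin 2) : ℝ :=
  |corr P 0 0 + (-1 : ℝ) ^ (β : ℕ) * corr P 0 1 + (-1 : ℝ) ^ (α : ℕ) * corr P 1 0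
    + (-1 : ℝ) ^ ((α : ℕ) + (β : ℕ) + 1) * corr P 1 1|

/-- Bell strength `Γ`. -/
def gammaStrength (P : Box) : ℝ :=
  min (|(|bell P 0 0 - bell P 0 1|) - (|bell P 1 0 - bell P 1 1|)|)
    (min (|(|bell P 0 0 - bell P 1 0|) - (|bell P 0 1 - bell P 1 1|)|)
      (|(|bell P 0 0 - bell P 1 1|) - (|bell P 0 1 - bell P 1 0|)|))

/-- Valid box: nonnegative and normalized. -/
def IsBox (P : Box) : Prop :=
  (∀ a b x y, 0 ≤ P a b x y) ∧ ∀ x y, ∑ a : Fin 2, ∑ b : Fin 2, P a b x y = 1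

/-- Nonsignaling condition. -/
def NonSignaling (P : Box) : Prop :=
  (∀ a x y y', ∑ b : Fin 2, P a b x y = ∑ b : Fin 2, P a b x y') ∧
  (∀ b x x' y, ∑ a : Fin 2, P a b x y = ∑ a : Fin 2, P a b x' y)

/-- The noisy PR box `p·P_PR + (1-p)·P_N`. -/
def noisyPR (p : ℝ) : Box := fun a b x y =>
  (1 + (-1 : ℝ) ^ ((a : ℕ) + (b : ℕ) + (x : ℕ) * (y : ℕ)) * p) / 4

/-- The PR box `P_PR^{αβγ}` (addition/multiplication in `Fin 2` is mod 2). -/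
def PRbox (α β γ : Fin 2) : Box := fun a b x y =>
  if a + b = x * y + α * x + β * y + γ then 1 / 2 else 0

/-- The local deterministic box `P_D^{αβγε}`. -/
def detBox (α β γ ε : Fin 2) : Box := fun a b x y =>
  if a = α * x + β ∧ b = γ * y + ε then 1 else 0

private lemma abs_corr_le_one (P : Box) (h : IsBox P) (x y : Fin 2) : |corr P x y| ≤ 1 := by
  obtain ⟨hpos, hsum⟩ := h
  have h1 := hsum x y
  simp [Fin.sum_univ_two] at h1
  rw [corr]
  simp [Fin.sum_univ_two]
  rw [abs_le]
  constructor <;>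
    nlinarith [hpos 0 0 x y, hpos 0 1 x y, hpos 1 0 x y, hpos 1 1 x y]

private lemma bell00 (P : Box) : bell P 0 0 = |corr P 0 0 + corr P 0 1 + corr P 1 0 - corr P 1 1| := by
  unfold bell; norm_num; congr 1
private lemma bell01 (P : Box) : bell P 0 1 = |corr P 0 0 - corr P 0 1 + corr P 1 0 + corr P 1 1| := by
  unfold bell; norm_num; congr 1
private lemma bell10 (P : Box) : bell P 1 0 = |corr P 0 0 + corr P 0 1 - corr P 1 0 + corr P 1 1| := by
  unfold bell; norm_num; congr 1
private lemma bell11 (P : Box) : bell P 1 1 = |corr P 0 0 - corr P 0 1 - corr P 1 0 - corr P 1 1| := by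
  unfold bell; norm_num; congr 1

private lemma pair_pos₁ (a b c d : ℝ) (h1 : b + c < a + d) (h2 : b + d < a + c) :
    0 < |(|a - b|) - (|c - d|)| := by
  have hab : 0 < a - b := by linarith
  have h3 : |c - d| < |a - b| := by
    rw [abs_of_pos hab, abs_sub_lt_iff]
    exact ⟨by linarith, by linarith⟩
  exact abs_pos.mpr (sub_ne_zero.mpr h3.ne')

private lemma pair_pos₂ (a b c d : ℝ) (h1 : a + c < b + d) (h2 : a + d < b + c) :
    0 < |(|a - b|) - (|c - d|)| := by
  rw [abs_sub_comm a b]; exact pair_pos₁ b a c d h1 h2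

private lemma pair_pos₃ (a b c d : ℝ) (h1 : d + a < c + b) (h2 : d + b < c + a) :
    0 < |(|a - b|) - (|c - d|)| := by
  rw [abs_sub_comm (|a - b|)]; exact pair_pos₁ c d a b h1 h2

private lemma pair_pos₄ (a b c d : ℝ) (h1 : c + a < d + b) (h2 : c + b < d + a) :
    0 < |(|a - b|) - (|c - d|)| := by
  rw [abs_sub_comm (|a - b|), abs_sub_comm c d]; exact pair_pos₁ d c a b h1 h2


lemma master0 (p q r s : ℝ) (hp : |p| ≤ 1) (hq : |q| ≤ 1) (hr : |r| ≤ 1) (hs : |s| ≤ 1)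
    (h : 2 < |p + q + r - s|) :
    |p + q - r + s| + |p - q - r - s| < |p + q + r - s| + |p - q + r + s| ∧
    |p - q + r + s| + |p - q - r - s| < |p + q + r - s| + |p + q - r + s| ∧
    |p - q + r + s| + |p + q - r + s| < |p + q + r - s| + |p - q - r - s| := by
  rw [abs_le] at hp hq hr hs
  rcases abs_cases (p + q + r - s) with ⟨e0, s0⟩ | ⟨e0, s0⟩ <;>
  rcases abs_cases (p - q + r + s) with ⟨e1, s1⟩ | ⟨e1, s1⟩ <;>
  rcases abs_cases (p + q - r + s) with ⟨e2, s2⟩ | ⟨e2, s2⟩ <;>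
  rcases abs_cases (p - q - r - s) with ⟨e3, s3⟩ | ⟨e3, s3⟩ <;>
  rw [e0] at h <;> rw [e0, e1, e2, e3] <;>
  exact ⟨by linarith, by linarith, by linarith⟩

lemma master1 (p q r s : ℝ) (hp : |p| ≤ 1) (hq : |q| ≤ 1) (hr : |r| ≤ 1) (hs : |s| ≤ 1)
    (h : 2 < |p - q + r + s|) :
    |p + q - r + s| + |p - q - r - s| < |p - q + r + s| + |p + q + r - s| ∧
    |p + q + r - s| + |p - q - r - s| < |p - q + r + s| + |p + q - r + s| ∧
    |p + q + r - s| + |p + q - r + s| < |p - q + r + s| + |p - q - r - s| := by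
  rw [abs_le] at hp hq hr hs
  rcases abs_cases (p + q + r - s) with ⟨e0, s0⟩ | ⟨e0, s0⟩ <;>
  rcases abs_cases (p - q + r + s) with ⟨e1, s1⟩ | ⟨e1, s1⟩ <;>
  rcases abs_cases (p + q - r + s) with ⟨e2, s2⟩ | ⟨e2, s2⟩ <;>
  rcases abs_cases (p - q - r - s) with ⟨e3, s3⟩ | ⟨e3, s3⟩ <;>
  rw [e1] at h <;> rw [e0, e1, e2, e3] <;>
  exact ⟨by linarith, by linarith, by linarith⟩

lemma master2 (p q r s : ℝ) (hp : |p| ≤ 1) (hq : |q| ≤ 1) (hr : |r| ≤ 1) (hs : |s| ≤ 1)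
    (h : 2 < |p + q - r + s|) :
    |p - q + r + s| + |p - q - r - s| < |p + q - r + s| + |p + q + r - s| ∧
    |p + q + r - s| + |p - q - r - s| < |p + q - r + s| + |p - q + r + s| ∧
    |p + q + r - s| + |p - q + r + s| < |p + q - r + s| + |p - q - r - s| := by
  rw [abs_le] at hp hq hr hs
  rcases abs_cases (p + q + r - s) with ⟨e0, s0⟩ | ⟨e0, s0⟩ <;>
  rcases abs_cases (p - q + r + s) with ⟨e1, s1⟩ | ⟨e1, s1⟩ <;>
  rcases abs_cases (p + q - r + s) with ⟨e2, s2⟩ | ⟨e2, s2⟩ <;>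
  rcases abs_cases (p - q - r - s) with ⟨e3, s3⟩ | ⟨e3, s3⟩ <;>
  rw [e2] at h <;> rw [e0, e1, e2, e3] <;>
  exact ⟨by linarith, by linarith, by linarith⟩

lemma master3 (p q r s : ℝ) (hp : |p| ≤ 1) (hq : |q| ≤ 1) (hr : |r| ≤ 1) (hs : |s| ≤ 1)
    (h : 2 < |p - q - r - s|) :
    |p - q + r + s| + |p + q - r + s| < |p - q - r - s| + |p + q + r - s| ∧
    |p + q + r - s| + |p + q - r + s| < |p - q - r - s| + |p - q + r + s| ∧
    |p + q + r - s| + |p - q + r + s| < |p - q - r - s| + |p + q - r + s| := by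
  rw [abs_le] at hp hq hr hs
  rcases abs_cases (p + q + r - s) with ⟨e0, s0⟩ | ⟨e0, s0⟩ <;>
  rcases abs_cases (p - q + r + s) with ⟨e1, s1⟩ | ⟨e1, s1⟩ <;>
  rcases abs_cases (p + q - r + s) with ⟨e2, s2⟩ | ⟨e2, s2⟩ <;>
  rcases abs_cases (p - q - r - s) with ⟨e3, s3⟩ | ⟨e3, s3⟩ <;>
  rw [e3] at h <;> rw [e0, e1, e2, e3] <;>
  exact ⟨by linarith, by linarith, by linarith⟩

/-- a nonlocal nonsignaling box has `Γ > 0`; equivalently a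
nonsignaling box with `Γ = 0` satisfies all four CHSH inequalities. -/
theorem nonlocal_implies_gamma_pos (P : Box) (hbox : IsBox P) (hns : NonSignaling P) :
    ((∃ α β : Fin 2, 2 < bell P α β) → 0 < gammaStrength P) ∧
    (gammaStrength P = 0 → ∀ α β : Fin 2, bell P α β ≤ 2) := by
  have hc : ∀ x y, |corr P x y| ≤ 1 := fun x y => abs_corr_le_one P hbox x y
  have key : (∃ α β : Fin 2, 2 < bell P α β) → 0 < gammaStrength P := by
    rintro ⟨α, β, hαβ⟩
    rcases (by omega : α = 0 ∨ α = 1) with rfl | rfl <;>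
      rcases (by omega : β = 0 ∨ β = 1) with rfl | rfl
    · obtain ⟨I1, I2, I3⟩ := master0 (corr P 0 0) (corr P 0 1) (corr P 1 0) (corr P 1 1)
        (hc 0 0) (hc 0 1) (hc 1 0) (hc 1 1) (bell00 P ▸ hαβ)
      rw [← bell00 P, ← bell01 P, ← bell10 P, ← bell11 P] at I1 I2 I3
      unfold gammaStrength
      refine lt_min (pair_pos₁ _ _ _ _ ?_ ?_)
        (lt_min (pair_pos₁ _ _ _ _ ?_ ?_)
          (pair_pos₁ _ _ _ _ ?_ ?_)) <;> linarith
    · obtain ⟨I1, I2, I3⟩ := master1 (corr P 0 0) (corr P 0 1) (corr P 1 0) (corr P 1 1)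
        (hc 0 0) (hc 0 1) (hc 1 0) (hc 1 1) (bell01 P ▸ hαβ)
      rw [← bell00 P, ← bell01 P, ← bell10 P, ← bell11 P] at I1 I2 I3
      unfold gammaStrength
      refine lt_min (pair_pos₂ _ _ _ _ ?_ ?_)
        (lt_min (pair_pos₃ _ _ _ _ ?_ ?_)
          (pair_pos₃ _ _ _ _ ?_ ?_)) <;> linarith
    · obtain ⟨I1, I2, I3⟩ := master2 (corr P 0 0) (corr P 0 1) (corr P 1 0) (corr P 1 1)
        (hc 0 0) (hc 0 1) (hc 1 0) (hc 1 1) (bell10 P ▸ hαβ)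
      rw [← bell00 P, ← bell01 P, ← bell10 P, ← bell11 P] at I1 I2 I3
      unfold gammaStrength
      refine lt_min (pair_pos₃ _ _ _ _ ?_ ?_)
        (lt_min (pair_pos₂ _ _ _ _ ?_ ?_)
          (pair_pos₄ _ _ _ _ ?_ ?_)) <;> linarith
    · obtain ⟨I1, I2, I3⟩ := master3 (corr P 0 0) (corr P 0 1) (corr P 1 0) (corr P 1 1)
        (hc 0 0) (hc 0 1) (hc 1 0) (hc 1 1) (bell11 P ▸ hαβ)
      rw [← bell00 P, ← bell01 P, ← bell10 P, ← bell11 P] at I1 I2 I3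
      unfold gammaStrength
      refine lt_min (pair_pos₄ _ _ _ _ ?_ ?_)
        (lt_min (pair_pos₄ _ _ _ _ ?_ ?_)
          (pair_pos₂ _ _ _ _ ?_ ?_)) <;> linarith
  refine ⟨key, fun h0 α β => ?_⟩
  by_contra hlt
  push_neg at hlt
  exact absurd h0 (ne_of_gt (key ⟨α, β, hlt⟩))
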